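/- In an unbalanced configuration of n clients on m servers in phase v (maximum load equal to v with ⌈n/m⌉ ≤ v ≤ ⌈n/(m−1)⌉), the number A of servers with at most v−2 clients satisfies A ≥ max{m − n/(v−1), 1}. -/

import Mathlib

open Finset

/-!
Every server outside the light set carries at least `v - 1` clients, so the `m - A` heavier
servers already hold `(m - A)(v - 1) ≤ n` clients, i.e. `A ≥ m - n/(v - 1)`. The configuration
is unbalanced, so some server has at most `max N - 2 ≤ v - 2` clients, i.e. `A ≥ 1`.
-/

section LoadCounting

variable {ι : Type*} [Fintype ι]

theorem card_filter_le_mul_le_sum (f : ι → ℕ) (k : ℕ) :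
    #{i | k ≤ f i} * k ≤ ∑ i, f i :=
  calc #{i | k ≤ f i} * k = #{i | k ≤ f i} • k := (smul_eq_mul _ _).symm
    _ ≤ ∑ i ∈ {i | k ≤ f i}, f i := card_nsmul_le_sum _ _ _ fun _ hi => (mem_filter.1 hi).2
    _ ≤ ∑ i, f i := sum_le_univ_sum_of_nonneg fun _ => Nat.zero_le _

theorem card_sub_sum_div_le_card_filter_lt (f : ι → ℕ) {k : ℕ} (hk : 0 < k) :
    (Fintype.card ι : ℝ) - (∑ i, f i : ℕ) / k ≤ #{i | f i < k} := by
  have hsplit : #{i | f i < k} + #{i | k ≤ f i} = Fintype.card ι := by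
    simpa only [not_lt, card_univ] using card_filter_add_card_filter_not (s := univ) (f · < k)
  have hheavy : (#{i | k ≤ f i} : ℝ) ≤ (∑ i, f i : ℕ) / k := by
    rw [le_div_iff₀ (by exact_mod_cast hk)]
    exact_mod_cast card_filter_le_mul_le_sum f k
  rw [← hsplit, Nat.cast_add]
  linarith

end LoadCounting

theorem light_servers_lower_bound_general (m n v : ℕ)
    (N : Fin m → ℕ) (hsum : ∑ i, N i = n)
    (hmax : ∀ i, N i ≤ v)
    (hunbal : ∃ i j : Fin m, N j + 2 ≤ N i) :
    ((Finset.univ.filter (fun i => (N i : ℤ) ≤ (v : ℤ) - 2)).card : ℝ) ≥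
      max ((m : ℝ) - (n : ℝ) / ((v : ℝ) - 1)) 1 := by
  obtain ⟨i, j, hij⟩ := hunbal
  have hv : 2 ≤ v := le_trans (by omega) (hmax i)
  -- The truncated `v - 1` of `ℕ` matches the integer bound `v - 2` even when `v ≤ 1`.
  have hlight : univ.filter (fun i => (N i : ℤ) ≤ (v : ℤ) - 2) = univ.filter (N · < v - 1) := by
    ext i
    simp only [mem_filter, mem_univ, true_and]
    omega
  have hj : j ∈ univ.filter (N · < v - 1) := by
    simp only [mem_filter, mem_univ, true_and]
    have := hmax i
    omega
  have hcount := card_sub_sum_div_le_card_filter_lt N (k := v - 1) (by omega)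
  rw [hsum, Fintype.card_fin, Nat.cast_sub (by omega : 1 ≤ v), Nat.cast_one] at hcount
  rw [hlight, ge_iff_le, max_le_iff]
  exact ⟨hcount, by exact_mod_cast card_pos.2 ⟨j, hj⟩⟩

theorem light_servers_lower_bound (m n v : ℕ) (hm : 2 ≤ m) (hv : 2 ≤ v)
    (N : Fin m → ℕ) (hsum : ∑ i, N i = n)
    (hmax : ∀ i, N i ≤ v) (hattained : ∃ i, N i = v)
    (hunbal : ∃ i j : Fin m, N j + 2 ≤ N i)
    (hceil_lo : (⌈(n : ℚ) / m⌉₊ : ℕ) ≤ v)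
    (hceil_hi : v ≤ (⌈(n : ℚ) / (m - 1 : ℚ)⌉₊ : ℕ)) :
    ((Finset.univ.filter (fun i => (N i : ℤ) ≤ (v : ℤ) - 2)).card : ℝ) ≥
      max ((m : ℝ) - (n : ℝ) / ((v : ℝ) - 1)) 1 :=
  light_servers_lower_bound_general m n v N hsum hmax hunbal
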